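/- arXiv:1201.1766 — 3 statements merged into one kernel-verified Lean document; each statement's English description precedes it below -/
import Mathlib

section
/- For a N(μ₀, σ₁²) prior Π₁ and N(μ₀, σ₂²) prior Π₂ on the mean μ of a N(μ,1/n) observation, with prior predictives M_iT = N(μ₀, 1/n + σ_i²), the probability M_{1T}(P₂(t₀) ≤ γ) equals 1 − G₁(((1/n+σ₂²)/(1/n+σ₁²)) · G₁⁻¹(1−γ)), where G₁ is the Chi-squared(1) CDF and P₂(t₀) = 1 − G₁((t₀−μ₀)²/(1/n+σ₂²)). -/
/-!
The substitution `u = z²` turns `G₁ x` into `2 ∫₀^√x φ` with `φ` the standard normal density, so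
under `N(m, v)` the statistic `(t - m)² / v` is `χ²₁`-distributed: the set where it is `< x` has mass
`G₁ x`. The same formula shows that `G₁` is continuous and strictly increasing on `[0, ∞)` with limit
`1`, so `G₁⁻¹` is a genuine inverse on `(0, 1)`. Hence, with `vᵢ = 1/n + σᵢ²`, `P₂(t₀) ≤ γ` says
`(t₀ - μ₀)² / v₂ ≥ G₁⁻¹(1 - γ)`, that is `(t₀ - μ₀)² / v₁ ≥ (v₂ / v₁) G₁⁻¹(1 - γ)`, an event of
`N(μ₀, v₁)`-probability `1 - G₁((v₂ / v₁) G₁⁻¹(1 - γ))`.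
-/

open MeasureTheory Real Set

/-- Chi-squared(1) density. -/
noncomputable def chi1Pdf (u : ℝ) : ℝ :=
  if 0 < u then (Real.sqrt (2 * Real.pi * u))⁻¹ * Real.exp (-u / 2) else 0

/-- Chi-squared(1) CDF `G₁`. -/
noncomputable def G1 (x : ℝ) : ℝ := ∫ u in Set.Iic x, chi1Pdf u

/-- Quantile function (generalized inverse) of `G₁`. -/
noncomputable def G1inv (p : ℝ) : ℝ := sInf {x : ℝ | p ≤ G1 x}

/-- Normal density with mean `m` and variance `v`. -/
noncomputable def normalPdf (m v t : ℝ) : ℝ :=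
  (Real.sqrt (2 * Real.pi * v))⁻¹ * Real.exp (-(t - m) ^ 2 / (2 * v))

open Filter Topology ProbabilityTheory

section normalPdf

variable {m v : ℝ}

lemma normalPdf_eq_gaussianPDFReal (hv : 0 ≤ v) : normalPdf m v = gaussianPDFReal m ⟨v, hv⟩ :=
  rfl

lemma normalPdf_pos (hv : 0 < v) (t : ℝ) : 0 < normalPdf m v t := by
  rw [normalPdf_eq_gaussianPDFReal hv.le]
  exact gaussianPDFReal_pos _ _ _ fun h => hv.ne' (congrArg NNReal.toReal h)

lemma integrable_normalPdf (hv : 0 < v) : Integrable (normalPdf m v) := by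
  rw [normalPdf_eq_gaussianPDFReal hv.le]
  exact integrable_gaussianPDFReal _ _

lemma integral_normalPdf (hv : 0 < v) : ∫ t, normalPdf m v t = 1 := by
  rw [normalPdf_eq_gaussianPDFReal hv.le]
  exact integral_gaussianPDFReal_eq_one _ fun h => hv.ne' (congrArg NNReal.toReal h)

lemma continuous_normalPdf : Continuous (normalPdf m v) := by
  unfold normalPdf
  fun_prop

lemma sqrt_mul_normalPdf_add_sqrt_mul (hv : 0 < v) (z : ℝ) :
    √v * normalPdf m v (m + √v * z) = normalPdf 0 1 z := by
  have hsq : √(2 * π * v) = √(2 * π * 1) * √v := by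
    rw [mul_one, sqrt_mul (by positivity)]
  simp only [normalPdf, hsq, add_sub_cancel_left, sub_zero, mul_pow, sq_sqrt hv.le]
  field_simp

lemma normalPdf_zero_one_neg (z : ℝ) : normalPdf 0 1 (-z) = normalPdf 0 1 z := by
  simp [normalPdf]

lemma intervalIntegral_neg_self_normalPdf_zero_one (b : ℝ) :
    ∫ z in -b..b, normalPdf 0 1 z = 2 * ∫ z in 0..b, normalPdf 0 1 z := by
  have hint : ∀ c d : ℝ, IntervalIntegrable (normalPdf 0 1) volume c d :=
    fun _ _ => continuous_normalPdf.intervalIntegrable _ _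
  have hsymm : ∫ z in -b..0, normalPdf 0 1 z = ∫ z in 0..b, normalPdf 0 1 z := by
    simpa [normalPdf_zero_one_neg] using
      (intervalIntegral.integral_comp_neg (a := 0) (b := b) (normalPdf 0 1)).symm
  rw [← intervalIntegral.integral_add_adjacent_intervals (hint _ 0) (hint 0 _), hsymm, two_mul]

lemma integral_Ioi_normalPdf_zero_one : ∫ z in Ioi 0, normalPdf 0 1 z = 1 / 2 := by
  have hφ : normalPdf 0 1 = fun z => (√(2 * π))⁻¹ * exp (-(1 / 2) * z ^ 2) := by
    ext z
    simp only [normalPdf, sub_zero, mul_one]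
    ring_nf
  rw [hφ, integral_const_mul, integral_gaussian_Ioi, div_div_eq_mul_div, div_one]
  field_simp

lemma strictMono_integral_normalPdf_zero_one :
    StrictMono fun r => ∫ z in 0..r, normalPdf 0 1 z :=
  strictMono_of_deriv_pos fun r => by
    rw [continuous_normalPdf.deriv_integral]
    exact normalPdf_pos one_pos r

end normalPdf

section G1

lemma chi1Pdf_of_nonpos {u : ℝ} (hu : u ≤ 0) : chi1Pdf u = 0 :=
  if_neg hu.not_gt

lemma mul_chi1Pdf_sq {z : ℝ} (hz : 0 < z) : z * chi1Pdf (z ^ 2) = normalPdf 0 1 z := by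
  have hsq : √(2 * π * z ^ 2) = √(2 * π * 1) * z := by
    rw [mul_one, sqrt_mul (by positivity), sqrt_sq hz.le]
  rw [chi1Pdf, if_pos (by positivity), normalPdf, hsq]
  field_simp
  ring_nf

lemma image_sq_Ioc_zero_sqrt {x : ℝ} (hx : 0 ≤ x) : (· ^ 2) '' Ioc 0 √x = Ioc 0 x := by
  ext u
  constructor
  · rintro ⟨z, ⟨hz0, hzx⟩, rfl⟩
    exact ⟨by positivity, by simpa [sq_sqrt hx] using pow_le_pow_left₀ hz0.le hzx 2⟩
  · rintro ⟨hu0, hux⟩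
    exact ⟨√u, ⟨sqrt_pos.2 hu0, sqrt_le_sqrt hux⟩, sq_sqrt hu0.le⟩

lemma G1_of_nonpos {x : ℝ} (hx : x ≤ 0) : G1 x = 0 :=
  setIntegral_eq_zero_of_forall_eq_zero fun _ hu => chi1Pdf_of_nonpos (le_trans hu hx)

lemma G1_eq_two_mul_integral_normalPdf {x : ℝ} (hx : 0 ≤ x) :
    G1 x = 2 * ∫ z in 0..√x, normalPdf 0 1 z := by
  have hsupp : G1 x = ∫ u in Ioc 0 x, chi1Pdf u :=
    setIntegral_eq_of_subset_of_forall_sdiff_eq_zero measurableSet_Iic Ioc_subset_Iic_self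
      fun u hu => chi1Pdf_of_nonpos (not_lt.1 fun h => hu.2 ⟨h, hu.1⟩)
  have hderiv : ∀ z ∈ Ioc (0 : ℝ) √x, HasDerivWithinAt (· ^ 2) (2 * z) (Ioc 0 √x) z :=
    fun z _ => by simpa using (hasDerivAt_pow 2 z).hasDerivWithinAt
  rw [hsupp, ← image_sq_Ioc_zero_sqrt hx,
    integral_image_eq_integral_abs_deriv_smul measurableSet_Ioc hderiv
      ((pow_left_strictMonoOn₀ two_ne_zero).injOn.mono fun _ hz => le_of_lt hz.1),
    intervalIntegral.integral_of_le (sqrt_nonneg x), ← integral_const_mul]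
  refine setIntegral_congr_fun measurableSet_Ioc fun z hz => ?_
  rw [smul_eq_mul, abs_of_pos (by linarith [hz.1]), mul_assoc, mul_chi1Pdf_sq hz.1]

lemma continuousOn_G1 : ContinuousOn G1 (Ici 0) := by
  have h : Continuous fun x => 2 * ∫ z in 0..√x, normalPdf 0 1 z :=
    continuous_const.mul ((integrable_normalPdf one_pos).continuous_primitive 0 |>.comp
      continuous_sqrt)
  exact h.continuousOn.congr fun x hx => G1_eq_two_mul_integral_normalPdf hx

lemma strictMonoOn_G1 : StrictMonoOn G1 (Ici 0) := by
  intro x hx y hy hxy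
  rw [G1_eq_two_mul_integral_normalPdf hx, G1_eq_two_mul_integral_normalPdf hy]
  gcongr
  exact strictMono_integral_normalPdf_zero_one (sqrt_lt_sqrt hx hxy)

lemma tendsto_G1_atTop : Tendsto G1 atTop (𝓝 1) := by
  have h := (intervalIntegral_tendsto_integral_Ioi 0
    (integrable_normalPdf (m := 0) one_pos).integrableOn tendsto_sqrt_atTop).const_mul 2
  rw [integral_Ioi_normalPdf_zero_one, mul_one_div_cancel two_ne_zero] at h
  refine h.congr' ?_
  filter_upwards [eventually_ge_atTop 0] with x hx
  exact (G1_eq_two_mul_integral_normalPdf hx).symm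

lemma exists_nonneg_G1_eq {p : ℝ} (hp0 : 0 ≤ p) (hp1 : p < 1) : ∃ x, 0 ≤ x ∧ G1 x = p := by
  obtain ⟨b, hpb, hb⟩ := ((tendsto_G1_atTop.eventually (eventually_ge_nhds hp1)).and
    (eventually_ge_atTop 0)).exists
  obtain ⟨x, hx, hGx⟩ := intermediate_value_Icc hb (continuousOn_G1.mono Icc_subset_Ici_self)
    ⟨(G1_of_nonpos le_rfl).trans_le hp0, hpb⟩
  exact ⟨x, hx.1, hGx⟩

lemma setOf_le_G1_eq_Ici {p x : ℝ} (hp : 0 < p) (hx : 0 ≤ x) (hGx : G1 x = p) :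
    {y | p ≤ G1 y} = Ici x := by
  ext y
  rw [mem_ofPred_eq, mem_Ici]
  refine ⟨fun hy => not_lt.1 fun hyx => ?_, fun hy => ?_⟩
  · rcases le_or_gt y 0 with hy0 | hy0
    · rw [G1_of_nonpos hy0] at hy
      exact hp.not_ge hy
    · exact hy.not_gt (hGx ▸ strictMonoOn_G1 hy0.le hx hyx)
  · exact hGx ▸ strictMonoOn_G1.monotoneOn hx (hx.trans hy) hy

lemma le_G1_iff_G1inv_le {p : ℝ} (hp0 : 0 < p) (hp1 : p < 1) (y : ℝ) :
    p ≤ G1 y ↔ G1inv p ≤ y := by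
  obtain ⟨x, hx, hGx⟩ := exists_nonneg_G1_eq hp0.le hp1
  have hS := setOf_le_G1_eq_Ici hp0 hx hGx
  rw [G1inv, hS, csInf_Ici]
  exact Set.ext_iff.1 hS y

end G1

lemma integral_normalPdf_setOf_sq_div_lt (m : ℝ) {v : ℝ} (hv : 0 < v) (x : ℝ) :
    ∫ t in {t | (t - m) ^ 2 / v < x}, normalPdf m v t = G1 x := by
  rcases lt_or_ge x 0 with hx | hx
  · have hempty : {t | (t - m) ^ 2 / v < x} = ∅ :=
      eq_empty_of_forall_notMem fun t ht => (ht.trans hx).not_ge (by positivity)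
    rw [hempty, setIntegral_empty, G1_of_nonpos hx.le]
  have hset : {t | (t - m) ^ 2 / v < x} = Ioo (m + √v * -√x) (m + √v * √x) := by
    ext t
    rw [mem_ofPred_eq, div_lt_iff₀' hv, sq_lt, sub_lt_iff_lt_add', lt_sub_iff_add_lt',
      sqrt_mul hv.le, mem_Ioo, mul_neg, ← sub_eq_add_neg]
  rw [hset, ← integral_Ioc_eq_integral_Ioo, ← intervalIntegral.integral_of_le (by
      nlinarith [sqrt_nonneg v, sqrt_nonneg x]),
    ← intervalIntegral.smul_integral_comp_add_mul, smul_eq_mul,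
    ← intervalIntegral.integral_const_mul]
  simp only [sqrt_mul_normalPdf_add_sqrt_mul hv]
  rw [intervalIntegral_neg_self_normalPdf_zero_one, G1_eq_two_mul_integral_normalPdf hx]

theorem stmt0_general (n : ℕ) (hn : 0 < n) (μ0 σ1 σ2 : ℝ)
    (γ : ℝ) (hγ : γ ∈ Set.Ioo (0 : ℝ) 1) :
    (∫ t in {t : ℝ | 1 - G1 ((t - μ0) ^ 2 / (1 / n + σ2 ^ 2)) ≤ γ},
        normalPdf μ0 (1 / n + σ1 ^ 2) t)
      = 1 - G1 (((1 / n + σ2 ^ 2) / (1 / n + σ1 ^ 2)) * G1inv (1 - γ)) := by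
  have hn' : (0 : ℝ) < n := Nat.cast_pos.2 hn
  set v1 : ℝ := 1 / n + σ1 ^ 2
  set v2 : ℝ := 1 / n + σ2 ^ 2
  have hv1 : 0 < v1 := by positivity
  have hv2 : 0 < v2 := by positivity
  have hquantile := le_G1_iff_G1inv_le (p := 1 - γ) (by linarith [hγ.2]) (by linarith [hγ.1])
  have hset : {t | 1 - G1 ((t - μ0) ^ 2 / v2) ≤ γ}
      = {t | (t - μ0) ^ 2 / v1 < v2 / v1 * G1inv (1 - γ)}ᶜ := by
    ext t
    rw [mem_compl_iff, mem_ofPred_eq, mem_ofPred_eq, not_lt, sub_le_comm, hquantile,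
      le_div_iff₀ hv2, div_mul_eq_mul_div, div_le_div_iff_of_pos_right hv1, mul_comm]
  rw [hset, setIntegral_compl (measurableSet_lt (by fun_prop) measurable_const)
    (integrable_normalPdf hv1), integral_normalPdf hv1, integral_normalPdf_setOf_sq_div_lt μ0 hv1]

/-- For normal priors `N(μ₀, σᵢ²)` on the mean of a `N(μ, 1/n)` observation,
with prior predictives `M_iT = N(μ₀, 1/n + σᵢ²)` and
`P₂(t₀) = 1 − G₁((t₀ − μ₀)²/(1/n + σ₂²))`, one has
`M₁T(P₂(t₀) ≤ γ) = 1 − G₁(((1/n+σ₂²)/(1/n+σ₁²)) G₁⁻¹(1−γ))`. -/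
theorem stmt0 (n : ℕ) (hn : 0 < n) (μ0 σ1 σ2 : ℝ) (hσ1 : 0 < σ1) (hσ2 : 0 < σ2)
    (γ : ℝ) (hγ : γ ∈ Set.Ioo (0 : ℝ) 1) :
    (∫ t in {t : ℝ | 1 - G1 ((t - μ0) ^ 2 / (1 / n + σ2 ^ 2)) ≤ γ},
        normalPdf μ0 (1 / n + σ1 ^ 2) t)
      = 1 - G1 (((1 / n + σ2 ^ 2) / (1 / n + σ1 ^ 2)) * G1inv (1 - γ)) :=
  stmt0_general n hn μ0 σ1 σ2 γ hγ
end

section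
/- sup over γ ∈ (0,1) of G₁⁻¹(1−γ)/H_{1,λ}⁻¹(1−γ) equals (2/λ) Γ²((λ+1)/2)/Γ²(λ/2), where G₁ is the Chi-squared(1) CDF and H_{1,λ} is the F(1,λ) CDF. -/
open MeasureTheory Real Set

/-- `F(1, λ)` density. -/
noncomputable def fPdf (l x : ℝ) : ℝ :=
  if 0 < x then
    (Real.Gamma ((1 + l) / 2) / (Real.Gamma (1 / 2) * Real.Gamma (l / 2))) *
      (1 / l) ^ ((1 : ℝ) / 2) * x ^ (-(1 / 2 : ℝ)) * (1 + x / l) ^ (-((1 + l) / 2))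
  else 0

/-- `F(1, λ)` CDF `H_{1,λ}`. -/
noncomputable def H1 (l x : ℝ) : ℝ := ∫ u in Set.Iic x, fPdf l u

/-- Quantile function (generalized inverse) of a CDF. -/
noncomputable def qtl (F : ℝ → ℝ) (p : ℝ) : ℝ := sInf {x : ℝ | p ≤ F x}

/-! Write `κ = (2/λ) Γ((λ+1)/2)² / Γ(λ/2)²` (`kappa`), `f` for the `F(1,λ)` density and `g` for the
`χ²₁` density. For `c > 0` and `u > 0`,
`f u = exp (log (κ/c)/2 - ψ_c u) · c g(c u)` with `ψ_c u = (1+λ)/2 · log (1 + u/λ) - c u/2`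
(`fLogRatio`); `κ` is the square of the ratio of the coefficients of `u^(-1/2)` in `f` and `g`.

For `c = κ` the function `ψ_κ` is concave with `ψ_κ 0 = 0`, so the densities `f` and `κ g(κ ·)`
cross at most once; as both have mass one, `H(x) ≤ G(κ x)` for all `x`, i.e. `G⁻¹(p) ≤ κ H⁻¹(p)`.
For `c < κ` the factor `exp (log (κ/c)/2 - ψ_c u)` stays above some `θ⁻¹ > 1` near `0`, so
`G(c y) ≤ θ H(y)` for small `y`, which forces `c H⁻¹(p) ≤ G⁻¹(p)` for small `p`.
The mass of `f` is computed by the substitution `x = λ t / (1 - t)`, which turns `f` into the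
`Beta(1/2, λ/2)` density. -/

open Filter Topology ProbabilityTheory

lemma integrable_and_integral_eq_one_of_lintegral {f : ℝ → ℝ} (hf : 0 ≤ f) (hfm : Measurable f)
    (h : ∫⁻ x, ENNReal.ofReal (f x) = 1) : Integrable f ∧ ∫ x, f x = 1 := by
  refine ⟨⟨hfm.aestronglyMeasurable, ?_⟩, ?_⟩
  · rw [hasFiniteIntegral_iff_ofReal (ae_of_all _ hf), h]
    exact ENNReal.one_lt_top
  · rw [integral_eq_lintegral_of_nonneg_ae (ae_of_all _ hf) hfm.aestronglyMeasurable, h,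
      ENNReal.toReal_one]

namespace ProbabilityTheory

lemma integrable_and_integral_gammaPDFReal {a r : ℝ} (ha : 0 < a) (hr : 0 < r) :
    Integrable (gammaPDFReal a r) ∧ ∫ x, gammaPDFReal a r x = 1 :=
  integrable_and_integral_eq_one_of_lintegral (gammaPDFReal_nonneg ha hr)
    (measurable_gammaPDFReal a r) (lintegral_gammaPDF_eq_one ha hr)

lemma betaPDFReal_nonneg {α β : ℝ} (hα : 0 < α) (hβ : 0 < β) (x : ℝ) :
    0 ≤ betaPDFReal α β x := by
  by_cases hx : 0 < x ∧ x < 1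
  · exact (betaPDFReal_pos hx.1 hx.2 hα hβ).le
  · rw [betaPDFReal, if_neg hx]

lemma integrable_and_integral_betaPDFReal {α β : ℝ} (hα : 0 < α) (hβ : 0 < β) :
    Integrable (betaPDFReal α β) ∧ ∫ x, betaPDFReal α β x = 1 :=
  integrable_and_integral_eq_one_of_lintegral (betaPDFReal_nonneg hα hβ)
    (measurable_betaPDFReal α β) (lintegral_betaPDF_eq_one hα hβ)

end ProbabilityTheory

structure IsContinuousPosCdf (F : ℝ → ℝ) : Prop where
  monotone : Monotone F
  continuous : Continuous F
  eq_zero_of_nonpos : ∀ x ≤ 0, F x = 0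
  tendsto_atTop : Tendsto F atTop (𝓝 1)

section DensityCdf

variable {f : ℝ → ℝ}

lemma isContinuousPosCdf_integral_Iic (hf : Integrable f) (hf_nonneg : 0 ≤ f)
    (hf_zero : ∀ x ≤ 0, f x = 0) (hf_one : ∫ x, f x = 1) :
    IsContinuousPosCdf fun x => ∫ u in Iic x, f u where
  monotone _ _ hab := setIntegral_mono_set hf.integrableOn (ae_of_all _ hf_nonneg)
    (Iic_subset_Iic.2 hab).eventuallyLE
  continuous := by
    have h : (fun x => ∫ u in Iic x, f u) =
        fun x => (∫ u in Iic 0, f u) + ∫ u in (0 : ℝ)..x, f u := by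
      ext x
      rw [← intervalIntegral.integral_Iic_sub_Iic hf.integrableOn hf.integrableOn]
      ring
    rw [h]
    exact continuous_const.add
      (intervalIntegral.continuous_primitive (fun _ _ => hf.intervalIntegrable) 0)
  eq_zero_of_nonpos x hx :=
    setIntegral_eq_zero_of_forall_eq_zero fun u hu => hf_zero u (le_trans hu hx)
  tendsto_atTop := hf_one ▸ (aecover_Iic tendsto_id).integral_tendsto_of_countably_generated hf

lemma integral_Iic_pos (hf : Integrable f) (hf_nonneg : 0 ≤ f) (hf_pos : ∀ x > 0, 0 < f x)
    {x : ℝ} (hx : 0 < x) : 0 < ∫ u in Iic x, f u := by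
  rw [setIntegral_pos_iff_support_of_nonneg_ae (ae_of_all _ hf_nonneg) hf.integrableOn]
  calc (0 : ENNReal) < volume (Ioc 0 x) := by simp [hx]
    _ ≤ volume (Function.support f ∩ Iic x) :=
      measure_mono fun u hu => ⟨(hf_pos u hu.1).ne', hu.2⟩

lemma integral_Iic_mul_left (f : ℝ → ℝ) {c : ℝ} (hc : 0 < c) (x : ℝ) :
    ∫ u in Iic (c * x), f u = ∫ u in Iic x, c * f (c * u) := by
  rw [← image_mul_left_Iic hc, integral_image_eq_integral_abs_deriv_smul measurableSet_Iic
    (f := (c * ·)) (f' := fun _ => c)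
    (fun u _ => ((hasDerivAt_id u).const_mul c).hasDerivWithinAt.congr_deriv (mul_one c))
    (mul_right_injective₀ hc.ne').injOn]
  simp [abs_of_pos hc]

lemma integral_Iic_le_of_crossing {g : ℝ → ℝ} (hf : Integrable f) (hg : Integrable g)
    (h_eq : ∫ u, f u = ∫ u, g u) {x : ℝ}
    (h : (∀ u ≤ x, f u ≤ g u) ∨ ∀ u > x, g u ≤ f u) :
    ∫ u in Iic x, f u ≤ ∫ u in Iic x, g u := by
  rcases h with h | h
  · exact setIntegral_mono_on hf.integrableOn hg.integrableOn measurableSet_Iic h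
  · have hfx := integral_add_compl (measurableSet_Iic (a := x)) hf
    have hgx := integral_add_compl (measurableSet_Iic (a := x)) hg
    rw [compl_Iic] at hfx hgx
    have := setIntegral_mono_on hg.integrableOn hf.integrableOn measurableSet_Ioi h
    linarith

end DensityCdf

namespace IsContinuousPosCdf

section

variable {F : ℝ → ℝ} (hF : IsContinuousPosCdf F) {p : ℝ}
include hF

lemma bddBelow_setOf_le (hp : 0 < p) : BddBelow {x | p ≤ F x} :=
  ⟨0, fun x (hx : p ≤ F x) => not_lt.1 fun h => (hF.eq_zero_of_nonpos x h.le ▸ hx).not_gt hp⟩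

lemma nonempty_setOf_le (hp : p < 1) : {x | p ≤ F x}.Nonempty :=
  (hF.tendsto_atTop.eventually_const_le hp).exists

lemma qtl_le (hp : 0 < p) {y : ℝ} (hy : p ≤ F y) : qtl F p ≤ y :=
  csInf_le (hF.bddBelow_setOf_le hp) hy

lemma le_qtl (hp : p < 1) {t : ℝ} (ht : F t < p) : t ≤ qtl F p :=
  le_csInf (hF.nonempty_setOf_le hp) fun _ hx =>
    not_lt.1 fun h => (ht.trans_le hx).not_ge (hF.monotone h.le)

lemma apply_qtl (hp : p ∈ Ioo 0 1) : F (qtl F p) = p := by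
  have hbdd := hF.bddBelow_setOf_le hp.1
  refine le_antisymm ?_ ((isClosed_le continuous_const hF.continuous).csInf_mem
    (hF.nonempty_setOf_le hp.2) hbdd)
  refine le_of_tendsto
    ((hF.continuous.tendsto _).mono_left (nhdsWithin_le_nhds (s := Iio (qtl F p))))
    (eventually_nhdsWithin_of_forall fun x hx => ?_)
  exact (not_le.1 (notMem_of_lt_csInf (s := {x | p ≤ F x}) hx hbdd)).le

lemma qtl_pos (hp : p ∈ Ioo 0 1) : 0 < qtl F p :=
  not_le.1 fun h => (hF.eq_zero_of_nonpos _ h ▸ hF.apply_qtl hp).not_lt hp.1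

end

section

variable {F G : ℝ → ℝ} (hF : IsContinuousPosCdf F) (hG : IsContinuousPosCdf G)
include hF hG

lemma qtl_le_mul_qtl {K : ℝ} (hFG : ∀ x, F x ≤ G (K * x)) {p : ℝ} (hp : p ∈ Ioo 0 1) :
    qtl G p ≤ K * qtl F p :=
  hG.qtl_le hp.1 ((hF.apply_qtl hp).ge.trans (hFG _))

lemma exists_mul_qtl_le_qtl {c θ y₀ : ℝ} (hθ : θ < 1) (hy₀ : 0 < F y₀)
    (hGF : ∀ y ∈ Ioc 0 y₀, G (c * y) ≤ θ * F y) : ∃ p ∈ Ioo 0 1, c * qtl F p ≤ qtl G p := by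
  set p := min (F y₀) (1 / 2)
  have hp : p ∈ Ioo 0 1 := ⟨lt_min hy₀ (by norm_num), (min_le_right _ _).trans_lt (by norm_num)⟩
  have hq : qtl F p ∈ Ioc 0 y₀ := ⟨hF.qtl_pos hp, hF.qtl_le hp.1 (min_le_left _ _)⟩
  refine ⟨p, hp, hG.le_qtl hp.2 ?_⟩
  calc G (c * qtl F p) ≤ θ * F (qtl F p) := hGF _ hq
    _ = θ * p := by rw [hF.apply_qtl hp]
    _ < p := by nlinarith [hp.1]

lemma sSup_qtl_div_qtl {K : ℝ} (hK : 0 < K) (hFG : ∀ x, F x ≤ G (K * x))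
    (hGF : ∀ c ∈ Ioo 0 K, ∃ p ∈ Ioo 0 1, c * qtl F p ≤ qtl G p) :
    sSup ((fun γ => qtl G (1 - γ) / qtl F (1 - γ)) '' Ioo 0 1) = K := by
  have one_sub_mem {p : ℝ} (hp : p ∈ Ioo 0 1) : 1 - p ∈ Ioo 0 1 :=
    ⟨by linarith [hp.2], by linarith [hp.1]⟩
  refine csSup_eq_of_forall_le_of_forall_lt_exists_gt
    (Set.image_nonempty.2 (nonempty_Ioo.2 zero_lt_one)) ?_ ?_
  · rintro _ ⟨γ, hγ, rfl⟩
    have hp := one_sub_mem hγ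
    exact (div_le_iff₀ (hF.qtl_pos hp)).2 (hF.qtl_le_mul_qtl hG hFG hp)
  · intro w hw
    obtain ⟨c, hwc, hcK⟩ := exists_between (max_lt hw hK)
    obtain ⟨p, hp, hcp⟩ := hGF c ⟨(le_max_right _ _).trans_lt hwc, hcK⟩
    refine ⟨_, ⟨1 - p, one_sub_mem hp, rfl⟩, ?_⟩
    simp only [sub_sub_cancel]
    exact ((le_max_left _ _).trans_lt hwc).trans_le ((le_div_iff₀ (hF.qtl_pos hp)).2 hcp)

end

end IsContinuousPosCdf

lemma ConcaveOn.nonneg_on_Ioc_or_nonpos_on_Ioi {φ : ℝ → ℝ} (hφ : ConcaveOn ℝ (Ici 0) φ)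
    (hφ0 : φ 0 = 0) {x : ℝ} (hx : 0 < x) : (∀ u ∈ Ioc 0 x, 0 ≤ φ u) ∨ ∀ u > x, φ u ≤ 0 := by
  have slope_le {u v : ℝ} (hu : 0 < u) (huv : u ≤ v) : φ v / v ≤ φ u / u := by
    have := hφ.antitoneOn_slope_gt (mem_Ici.2 le_rfl) ⟨mem_Ici.2 hu.le, hu⟩
      ⟨mem_Ici.2 (hu.trans_le huv).le, hu.trans_le huv⟩ huv
    simpa only [slope_def_field, hφ0, sub_zero] using this
  by_cases h : 0 ≤ φ x
  · refine Or.inl fun u hu => ?_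
    simpa using (le_div_iff₀ hu.1).1 ((div_nonneg h hx.le).trans (slope_le hu.1 hu.2))
  · refine Or.inr fun u hu => ?_
    have := (slope_le hx hu.le).trans_lt (div_neg_of_neg_of_pos (not_le.1 h) hx)
    simpa using ((div_lt_iff₀ (hx.trans hu)).1 this).le

lemma chi1Pdf_eq_gammaPDFReal : chi1Pdf = gammaPDFReal (1 / 2) (1 / 2) := by
  ext u
  rcases lt_trichotomy u 0 with hu | rfl | hu
  · simp [chi1Pdf, gammaPDFReal, hu.not_gt, hu.not_ge]
  · simp [chi1Pdf, gammaPDFReal, Real.zero_rpow (by norm_num : (2⁻¹ : ℝ) - 1 ≠ 0)]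
  · rw [chi1Pdf, gammaPDFReal, if_pos hu, if_pos hu.le, Real.Gamma_one_half_eq,
      Real.sqrt_eq_rpow, Real.sqrt_eq_rpow, Real.mul_rpow (by positivity) hu.le,
      Real.mul_rpow (by norm_num) pi_pos.le, show (1 / 2 : ℝ) - 1 = -(1 / 2) by norm_num,
      Real.rpow_neg hu.le, Real.div_rpow (by norm_num) (by norm_num), Real.one_rpow]
    field_simp

lemma chi1Pdf_nonneg : 0 ≤ chi1Pdf :=
  chi1Pdf_eq_gammaPDFReal ▸ gammaPDFReal_nonneg (by norm_num) (by norm_num)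

lemma integrable_chi1Pdf : Integrable chi1Pdf :=
  chi1Pdf_eq_gammaPDFReal ▸ (integrable_and_integral_gammaPDFReal (by norm_num) (by norm_num)).1

lemma integral_chi1Pdf : ∫ u, chi1Pdf u = 1 :=
  chi1Pdf_eq_gammaPDFReal ▸ (integrable_and_integral_gammaPDFReal (by norm_num) (by norm_num)).2

lemma isContinuousPosCdf_G1 : IsContinuousPosCdf G1 :=
  isContinuousPosCdf_integral_Iic integrable_chi1Pdf chi1Pdf_nonneg (fun _ => chi1Pdf_of_nonpos)
    integral_chi1Pdf

lemma G1_mul_eq {c : ℝ} (hc : 0 < c) (x : ℝ) : G1 (c * x) = ∫ u in Iic x, c * chi1Pdf (c * u) :=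
  integral_Iic_mul_left chi1Pdf hc x

lemma integrable_mul_chi1Pdf_mul {c : ℝ} (hc : 0 < c) :
    Integrable fun u => c * chi1Pdf (c * u) :=
  (integrable_chi1Pdf.comp_mul_left' hc.ne').const_mul c

lemma integral_mul_chi1Pdf_mul {c : ℝ} (hc : 0 < c) : ∫ u, c * chi1Pdf (c * u) = 1 := by
  rw [integral_const_mul, Measure.integral_comp_mul_left chi1Pdf c, integral_chi1Pdf, smul_eq_mul,
    mul_one, abs_of_pos (inv_pos.2 hc), mul_inv_cancel₀ hc.ne']

lemma fPdf_of_nonpos (l : ℝ) {x : ℝ} (hx : x ≤ 0) : fPdf l x = 0 := if_neg hx.not_gt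

lemma fPdf_pos {l x : ℝ} (hl : 0 < l) (hx : 0 < x) : 0 < fPdf l x := by
  have := Real.Gamma_pos_of_pos (by linarith : 0 < (1 + l) / 2)
  have := Real.Gamma_pos_of_pos (by norm_num : (0 : ℝ) < 1 / 2)
  have := Real.Gamma_pos_of_pos (by linarith : 0 < l / 2)
  rw [fPdf, if_pos hx]
  positivity

lemma fPdf_nonneg {l : ℝ} (hl : 0 < l) (x : ℝ) : 0 ≤ fPdf l x := by
  rcases le_or_gt x 0 with hx | hx
  · exact (fPdf_of_nonpos l hx).ge
  · exact (fPdf_pos hl hx).le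

lemma hasDerivAt_mul_div_one_sub (l : ℝ) {t : ℝ} (ht : t ≠ 1) :
    HasDerivAt (fun t => l * t / (1 - t)) (l / (1 - t) ^ 2) t := by
  have : 1 - t ≠ 0 := sub_ne_zero.2 ht.symm
  refine (((hasDerivAt_id t).const_mul l).div ((hasDerivAt_id t).const_sub 1) this).congr_deriv ?_
  simp only [id]
  field_simp
  ring

lemma injOn_mul_div_one_sub {l : ℝ} (hl : l ≠ 0) :
    InjOn (fun t => l * t / (1 - t)) (Ioo 0 1) := by
  intro s hs t ht hst
  have h1 : 1 - s ≠ 0 := by linarith [hs.2]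
  have h2 : 1 - t ≠ 0 := by linarith [ht.2]
  rw [div_eq_div_iff h1 h2] at hst
  have : l * (s - t) = 0 := by linear_combination hst
  simpa [hl, sub_eq_zero] using this

lemma image_mul_div_one_sub {l : ℝ} (hl : 0 < l) :
    (fun t => l * t / (1 - t)) '' Ioo 0 1 = Ioi 0 := by
  ext x
  constructor
  · rintro ⟨t, ht, rfl⟩
    exact div_pos (mul_pos hl ht.1) (by linarith [ht.2])
  · intro (hx : 0 < x)
    refine ⟨x / (x + l), ⟨by positivity, (div_lt_one (by positivity)).2 (by linarith)⟩, ?_⟩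
    have : x + l - x = l := by ring
    field_simp
    rw [this, div_self hl.ne']

lemma abs_deriv_smul_fPdf_eq_betaPDFReal {l t : ℝ} (hl : 0 < l) (ht : t ∈ Ioo 0 1) :
    |l / (1 - t) ^ 2| • fPdf l (l * t / (1 - t)) = betaPDFReal (1 / 2) (l / 2) t := by
  obtain ⟨ht0, ht1⟩ := ht
  have hs : 0 < 1 - t := by linarith
  rw [smul_eq_mul, abs_of_pos (by positivity), fPdf, if_pos (by positivity), betaPDFReal,
    if_pos ⟨ht0, ht1⟩, beta, Real.div_rpow (by positivity) hs.le, Real.mul_rpow hl.le ht0.le,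
    show 1 + l * t / (1 - t) / l = (1 - t)⁻¹ by field_simp; ring, Real.inv_rpow hs.le,
    Real.div_rpow zero_le_one hl.le, Real.one_rpow, show (1 : ℝ) / 2 + l / 2 = (1 + l) / 2 by ring]
  have hl' : l ^ (1 / 2 : ℝ) * l ^ (1 / 2 : ℝ) = l := by
    rw [← Real.rpow_add hl]; norm_num
  have ht' : t ^ (1 / 2 - 1 : ℝ) = (t ^ (1 / 2 : ℝ))⁻¹ := by
    rw [← Real.rpow_neg ht0.le]; norm_num
  have hs' : (1 - t) ^ (l / 2 - 1) =
      (1 - t) ^ (1 / 2 : ℝ) * (1 - t) ^ ((1 + l) / 2) / (1 - t) ^ 2 := by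
    rw [← Real.rpow_add hs, ← Real.rpow_natCast, ← Real.rpow_sub hs]; ring_nf
  rw [ht', hs', Real.rpow_neg ht0.le, Real.rpow_neg hl.le, Real.rpow_neg hs.le ((1 + l) / 2),
    inv_inv]
  field_simp
  rw [sq, hl', mul_assoc, ← Real.rpow_add hs]
  norm_num

lemma support_fPdf_subset (l : ℝ) : Function.support (fPdf l) ⊆ Ioi 0 :=
  fun _ hx => not_le.1 fun h => hx (fPdf_of_nonpos l h)

lemma integrable_fPdf {l : ℝ} (hl : 0 < l) : Integrable (fPdf l) := by
  rw [← integrableOn_iff_integrable_of_support_subset (support_fPdf_subset l),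
    ← image_mul_div_one_sub hl, integrableOn_image_iff_integrableOn_abs_deriv_smul measurableSet_Ioo
      (fun t ht => (hasDerivAt_mul_div_one_sub l ht.2.ne).hasDerivWithinAt)
      (injOn_mul_div_one_sub hl.ne'),
    integrableOn_congr_fun (fun t ht => abs_deriv_smul_fPdf_eq_betaPDFReal hl ht) measurableSet_Ioo]
  exact (integrable_and_integral_betaPDFReal (by norm_num) (by positivity)).1.integrableOn

lemma integral_fPdf {l : ℝ} (hl : 0 < l) : ∫ x, fPdf l x = 1 := by
  rw [← setIntegral_eq_integral_of_forall_compl_eq_zero (s := Ioi 0)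
      (fun x hx => fPdf_of_nonpos l (not_lt.1 hx)),
    ← image_mul_div_one_sub hl, integral_image_eq_integral_abs_deriv_smul measurableSet_Ioo
      (fun t ht => (hasDerivAt_mul_div_one_sub l ht.2.ne).hasDerivWithinAt)
      (injOn_mul_div_one_sub hl.ne'),
    setIntegral_congr_fun measurableSet_Ioo (fun t ht => abs_deriv_smul_fPdf_eq_betaPDFReal hl ht),
    setIntegral_eq_integral_of_forall_compl_eq_zero (s := Ioo 0 1)
      (f := betaPDFReal (1 / 2) (l / 2)) (fun t ht => if_neg ht)]
  exact (integrable_and_integral_betaPDFReal (by norm_num) (by positivity)).2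

lemma isContinuousPosCdf_H1 {l : ℝ} (hl : 0 < l) : IsContinuousPosCdf (H1 l) :=
  isContinuousPosCdf_integral_Iic (integrable_fPdf hl) (fPdf_nonneg hl)
    (fun _ => fPdf_of_nonpos l) (integral_fPdf hl)

lemma H1_pos {l x : ℝ} (hl : 0 < l) (hx : 0 < x) : 0 < H1 l x :=
  integral_Iic_pos (integrable_fPdf hl) (fPdf_nonneg hl) (fun _ => fPdf_pos hl) hx

noncomputable def kappa (l : ℝ) : ℝ := (2 / l) * Gamma ((l + 1) / 2) ^ 2 / Gamma (l / 2) ^ 2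

lemma kappa_pos {l : ℝ} (hl : 0 < l) : 0 < kappa l := by
  have := Real.Gamma_pos_of_pos (by linarith : 0 < (l + 1) / 2)
  have := Real.Gamma_pos_of_pos (by linarith : 0 < l / 2)
  unfold kappa
  positivity

noncomputable def fLogRatio (l c u : ℝ) : ℝ := (1 + l) / 2 * log (1 + u / l) - c / 2 * u

lemma fPdf_eq_mul_chi1Pdf {l c u : ℝ} (hl : 0 < l) (hc : 0 < c) (hu : 0 < u) :
    fPdf l u = exp (log (kappa l / c) / 2 - fLogRatio l c u) * (c * chi1Pdf (c * u)) := by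
  have hGa := Real.Gamma_pos_of_pos (by linarith : 0 < (1 + l) / 2)
  have hGb := Real.Gamma_pos_of_pos (by linarith : 0 < l / 2)
  have hexp : exp (-fLogRatio l c u) * exp (-(c * u) / 2) = (1 + u / l) ^ (-((1 + l) / 2)) := by
    rw [← exp_add, rpow_def_of_pos (by positivity), fLogRatio]
    ring_nf
  have hconst : √(kappa l / c) * c * (√(2 * π * (c * u)))⁻¹ =
      Gamma ((1 + l) / 2) / (Gamma (1 / 2) * Gamma (l / 2)) * (1 / l) ^ (1 / 2 : ℝ) *
        u ^ (-(1 / 2) : ℝ) := by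
    rw [Real.rpow_neg hu.le, ← Real.sqrt_eq_rpow, ← Real.sqrt_eq_rpow, Real.Gamma_one_half_eq]
    have := kappa_pos hl
    refine (sq_eq_sq₀ (by positivity) (by positivity)).1 ?_
    simp only [mul_pow, div_pow, inv_pow]
    rw [Real.sq_sqrt (by positivity), Real.sq_sqrt (by positivity), Real.sq_sqrt (by positivity),
      Real.sq_sqrt (by positivity), Real.sq_sqrt hu.le, kappa,
      show (l + 1) / 2 = (1 + l) / 2 by ring]
    field_simp
  have hsqrt : exp (log (kappa l / c) / 2) = √(kappa l / c) := by
    rw [Real.sqrt_eq_rpow, Real.rpow_def_of_pos (div_pos (kappa_pos hl) hc)]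
    ring_nf
  rw [fPdf, if_pos hu, chi1Pdf, if_pos (mul_pos hc hu), ← hexp, ← hconst, sub_eq_add_neg, exp_add,
    hsqrt]
  ring

lemma concaveOn_fLogRatio {l : ℝ} (hl : 0 < l) (c : ℝ) :
    ConcaveOn ℝ (Ici 0) (fLogRatio l c) := by
  refine ⟨convex_Ici 0, fun x (hx : 0 ≤ x) y (hy : 0 ≤ y) a b ha hb hab => ?_⟩
  have hlog := strictConcaveOn_log_Ioi.concaveOn.2 (x := 1 + x / l) (y := 1 + y / l)
    (by simp only [mem_Ioi]; positivity) (by simp only [mem_Ioi]; positivity) ha hb hab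
  have harg : a • (1 + x / l) + b • (1 + y / l) = 1 + (a • x + b • y) / l := by
    simp only [smul_eq_mul]
    field_simp
    linear_combination l * hab
  rw [harg] at hlog
  rw [fLogRatio, fLogRatio, fLogRatio]
  simp only [smul_eq_mul] at hlog ⊢
  nlinarith [mul_le_mul_of_nonneg_left hlog (by linarith : 0 ≤ (1 + l) / 2)]

lemma fLogRatio_le {l c u : ℝ} (hl : 0 < l) (hc : 0 ≤ c) (hu : 0 ≤ u) :
    fLogRatio l c u ≤ (1 + l) / (2 * l) * u := by
  have hlog : log (1 + u / l) ≤ u / l := by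
    linarith [log_le_sub_one_of_pos (by positivity : 0 < 1 + u / l)]
  have : (1 + l) / 2 * log (1 + u / l) ≤ (1 + l) / 2 * (u / l) :=
    mul_le_mul_of_nonneg_left hlog (by positivity)
  calc fLogRatio l c u ≤ (1 + l) / 2 * (u / l) := by
        rw [fLogRatio]; nlinarith [mul_nonneg hc hu]
    _ = (1 + l) / (2 * l) * u := by field_simp

lemma H1_le_G1_kappa_mul {l : ℝ} (hl : 0 < l) (x : ℝ) : H1 l x ≤ G1 (kappa l * x) := by
  have hκ := kappa_pos hl
  rcases le_or_gt x 0 with hx | hx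
  · rw [(isContinuousPosCdf_H1 hl).eq_zero_of_nonpos x hx,
      isContinuousPosCdf_G1.eq_zero_of_nonpos _ (mul_nonpos_of_nonneg_of_nonpos hκ.le hx)]
  have hratio {u : ℝ} (hu : 0 < u) :
      fPdf l u = exp (-fLogRatio l (kappa l) u) * (kappa l * chi1Pdf (kappa l * u)) := by
    rw [fPdf_eq_mul_chi1Pdf hl hκ hu, div_self hκ.ne', log_one, zero_div, zero_sub]
  have hscaled_nonneg (u : ℝ) : 0 ≤ kappa l * chi1Pdf (kappa l * u) :=
    mul_nonneg hκ.le (chi1Pdf_nonneg _)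
  rw [G1_mul_eq hκ]
  refine integral_Iic_le_of_crossing (integrable_fPdf hl) (integrable_mul_chi1Pdf_mul hκ)
    (by rw [integral_fPdf hl, integral_mul_chi1Pdf_mul hκ]) ?_
  refine ((concaveOn_fLogRatio hl (kappa l)).nonneg_on_Ioc_or_nonpos_on_Ioi
    (by simp [fLogRatio]) hx).imp (fun h u hu => ?_) (fun h u hu => ?_)
  · rcases le_or_gt u 0 with hu0 | hu0
    · rw [fPdf_of_nonpos l hu0]
      exact hscaled_nonneg u
    · rw [hratio hu0]
      exact mul_le_of_le_one_left (hscaled_nonneg u)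
        (exp_le_one_iff.2 (neg_nonpos.2 (h u ⟨hu0, hu⟩)))
  · rw [hratio (hx.trans hu)]
    exact le_mul_of_one_le_left (hscaled_nonneg u) (one_le_exp_iff.2 (neg_nonneg.2 (h u hu)))

lemma exists_G1_mul_le_H1 {l c : ℝ} (hl : 0 < l) (hc : c ∈ Ioo 0 (kappa l)) :
    ∃ θ < 1, ∃ y₀ > 0, ∀ y ∈ Ioc 0 y₀, G1 (c * y) ≤ θ * H1 l y := by
  set ρ := log (kappa l / c) / 2 with hρ_def
  have hρ : 0 < ρ := half_pos (log_pos ((one_lt_div hc.1).2 hc.2))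
  refine ⟨exp (-(ρ / 2)), exp_lt_one_iff.2 (by linarith), l * ρ / (1 + l), by positivity,
    fun y hy => ?_⟩
  rw [G1_mul_eq hc.1, H1, ← integral_const_mul]
  refine setIntegral_mono_on (integrable_mul_chi1Pdf_mul hc.1).integrableOn
    ((integrable_fPdf hl).const_mul _).integrableOn measurableSet_Iic fun u (hu : u ≤ y) => ?_
  rcases le_or_gt u 0 with hu0 | hu0
  · rw [chi1Pdf_of_nonpos (mul_nonpos_of_nonneg_of_nonpos hc.1.le hu0), fPdf_of_nonpos l hu0]
    simp
  have hφ : fLogRatio l c u ≤ ρ / 2 :=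
    calc fLogRatio l c u ≤ (1 + l) / (2 * l) * u := fLogRatio_le hl hc.1.le hu0.le
      _ ≤ (1 + l) / (2 * l) * (l * ρ / (1 + l)) := by gcongr; exact hu.trans hy.2
      _ = ρ / 2 := by field_simp
  rw [fPdf_eq_mul_chi1Pdf hl hc.1 hu0, ← mul_assoc, ← exp_add]
  exact le_mul_of_one_le_left (mul_nonneg hc.1.le (chi1Pdf_nonneg _))
    (one_le_exp_iff.2 (by linarith [hρ_def]))

/-- `sup_{γ ∈ (0,1)} G₁⁻¹(1−γ)/H_{1,λ}⁻¹(1−γ) = (2/λ) Γ²((λ+1)/2)/Γ²(λ/2)`. -/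
theorem stmt14 (l : ℝ) (hl : 0 < l) :
    sSup ((fun γ : ℝ => qtl G1 (1 - γ) / qtl (H1 l) (1 - γ)) '' Set.Ioo 0 1)
      = (2 / l) * Real.Gamma ((l + 1) / 2) ^ 2 / Real.Gamma (l / 2) ^ 2 := by
  refine (isContinuousPosCdf_H1 hl).sSup_qtl_div_qtl isContinuousPosCdf_G1 (kappa_pos hl)
    (H1_le_G1_kappa_mul hl) fun c hc => ?_
  obtain ⟨θ, hθ, y₀, hy₀, hG1H1⟩ := exists_G1_mul_le_H1 hl hc
  exact (isContinuousPosCdf_H1 hl).exists_mul_qtl_le_qtl isContinuousPosCdf_G1 hθ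
    (H1_pos hl hy₀) hG1H1
end

section
/- Let α₁ ≥ α₂ > 0 and β_i = (α_i + 1/2) x_c⁻¹ for a fixed x_c > 0, and let M_i be the distribution on (0,∞) with density c_i u^{α_i −1} e^{−β_i u} (Gamma(α_i, rate β_i)). For 0 < r₁ ≤ 1 ≤ r₂ linked by r₁ − log r₁ = r₂ − log r₂ (equivalently log(r₁/r₂) = r₁ − r₂), one has M₁(x_c r₁ ≤ u ≤ x_c r₂) ≥ M₂(x_c r₁ ≤ u ≤ x_c r₂) for all r₂ ≥ 1. -/
/-!
The ratio of the two densities is `C · exp((α₁ - α₂) φ(u))` with `φ(u) = log u - u / x_c`,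
because the rates were chosen so that `β₁ - β₂ = (α₁ - α₂) / x_c`. The function `φ` increases
up to `x_c` and decreases afterwards, and the link between `r₁` and `r₂` says exactly that
`φ(x_c r₁) = φ(x_c r₂)`; so the interval `[x_c r₁, x_c r₂]` is a superlevel set of the
likelihood ratio. Since both densities have total mass one, such a region carries at least as
much mass under the numerator as under the denominator (the Neyman–Pearson argument).
-/

open MeasureTheory Real Set

/-- Gamma(shape α, rate β) density (on `(0,∞)`). -/
noncomputable def gammaDens (a b u : ℝ) : ℝ :=
  (b ^ a / Real.Gamma a) * u ^ (a - 1) * Real.exp (-b * u)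

section LikelihoodRatio

variable {α : Type*} [MeasurableSpace α] {μ : Measure α} {f g : α → ℝ} {s t : Set α} {K : ℝ}

theorem setIntegral_le_of_likelihoodRatio_region (hs : MeasurableSet s) (ht : MeasurableSet t)
    (hts : t ⊆ s) (hf : IntegrableOn f s μ) (hg : IntegrableOn g s μ) (hf0 : ∀ x ∈ s, 0 ≤ f x)
    (hfg : ∫ x in s, f x ∂μ = ∫ x in s, g x ∂μ)
    (hin : ∀ x ∈ t, K * f x ≤ g x) (hout : ∀ x ∈ s \ t, g x ≤ K * f x) :
    ∫ x in t, f x ∂μ ≤ ∫ x in t, g x ∂μ := by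
  have h_in : K * ∫ x in t, f x ∂μ ≤ ∫ x in t, g x ∂μ := by
    rw [← integral_const_mul]
    exact setIntegral_mono_on ((hf.mono_set hts).const_mul K) (hg.mono_set hts) ht hin
  have h_out : ∫ x in s \ t, g x ∂μ ≤ K * ∫ x in s \ t, f x ∂μ := by
    rw [← integral_const_mul]
    exact setIntegral_mono_on (hg.mono_set sdiff_subset) ((hf.mono_set sdiff_subset).const_mul K)
      (hs.diff ht) hout
  have hf_t : 0 ≤ ∫ x in t, f x ∂μ := setIntegral_nonneg ht fun x hx => hf0 x (hts hx)
  have hf_out : 0 ≤ ∫ x in s \ t, f x ∂μ :=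
    setIntegral_nonneg (hs.diff ht) fun x hx => hf0 x hx.1
  rw [setIntegral_sdiff ht hf hts] at h_out hf_out
  rw [setIntegral_sdiff ht hg hts] at h_out
  -- If `K ≥ 1` the mass comparison holds on `t` itself, if `K ≤ 1` it holds on `s \ t`.
  rcases le_total 1 K with hK | hK
  · nlinarith
  · nlinarith

end LikelihoodRatio

section Unimodal

variable {c : ℝ}

theorem monotoneOn_log_sub_div (hc : 0 < c) : MonotoneOn (fun u => log u - u / c) (Ioc 0 c) := by
  intro u hu v hv huv
  have hv0 : 0 < v := hv.1
  have hlog : log u - log v ≤ u / v - 1 := by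
    rw [← log_div hu.1.ne' hv0.ne']
    exact log_le_sub_one_of_pos (div_pos hu.1 hv0)
  have hlin : u / v - 1 ≤ (u - v) / c := by
    rw [div_sub_one hv0.ne', div_le_div_iff₀ hv0 hc]
    nlinarith [mul_le_mul_of_nonneg_left hv.2 (sub_nonneg.2 huv)]
  simp only [sub_div] at hlin ⊢
  linarith

theorem antitoneOn_log_sub_div (hc : 0 < c) : AntitoneOn (fun u => log u - u / c) (Ici c) := by
  intro u hu v hv huv
  have hu0 : 0 < u := hc.trans_le hu
  have hv0 : 0 < v := hu0.trans_le huv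
  have hlog : log v - log u ≤ v / u - 1 := by
    rw [← log_div hv0.ne' hu0.ne']
    exact log_le_sub_one_of_pos (div_pos hv0 hu0)
  have hlin : v / u - 1 ≤ (v - u) / c := by
    rw [div_sub_one hu0.ne', div_le_div_iff₀ hu0 hc]
    nlinarith [mul_le_mul_of_nonneg_left (show c ≤ u from hu) (sub_nonneg.2 huv)]
  simp only [sub_div] at hlin ⊢
  linarith

variable {φ : ℝ → ℝ} {a b u : ℝ}

theorem le_of_mem_Icc_of_unimodal (hmono : MonotoneOn φ (Ioc 0 c)) (hanti : AntitoneOn φ (Ici c))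
    (ha : 0 < a) (hac : a ≤ c) (hcb : c ≤ b) (hab : φ a = φ b) (hu : u ∈ Icc a b) :
    φ a ≤ φ u := by
  rcases le_total u c with huc | hcu
  · exact hmono ⟨ha, hac⟩ ⟨ha.trans_le hu.1, huc⟩ hu.1
  · exact hab ▸ hanti hcu hcb hu.2

theorem le_of_notMem_Icc_of_unimodal (hmono : MonotoneOn φ (Ioc 0 c))
    (hanti : AntitoneOn φ (Ici c)) (ha : 0 < a) (hac : a ≤ c) (hcb : c ≤ b) (hab : φ a = φ b)
    (hu0 : 0 < u) (hu : u ∉ Icc a b) : φ u ≤ φ a := by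
  rcases lt_or_ge u a with hua | hau
  · exact hmono ⟨hu0, hua.le.trans hac⟩ ⟨ha, hac⟩ hua.le
  · have hbu : b ≤ u := (lt_of_not_ge fun hub => hu ⟨hau, hub⟩).le
    exact hab ▸ hanti hcb (hcb.trans hbu) hbu

theorem setIntegral_Icc_le_of_eq_mul_unimodal {f g : ℝ → ℝ} (hf : IntegrableOn f (Ioi 0))
    (hg : IntegrableOn g (Ioi 0)) (hf0 : ∀ u ∈ Ioi 0, 0 ≤ f u)
    (hfg : ∫ u in Ioi 0, f u = ∫ u in Ioi 0, g u) (hratio : ∀ u ∈ Ioi 0, g u = φ u * f u)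
    (hmono : MonotoneOn φ (Ioc 0 c)) (hanti : AntitoneOn φ (Ici c))
    (ha : 0 < a) (hac : a ≤ c) (hcb : c ≤ b) (hab : φ a = φ b) :
    ∫ u in Icc a b, f u ≤ ∫ u in Icc a b, g u := by
  refine setIntegral_le_of_likelihoodRatio_region (K := φ a) measurableSet_Ioi measurableSet_Icc
    (fun u hu => ha.trans_le hu.1) hf hg hf0 hfg (fun u hu => ?_) (fun u hu => ?_)
  · have hu0 : 0 < u := ha.trans_le hu.1
    rw [hratio u hu0]
    exact mul_le_mul_of_nonneg_right
      (le_of_mem_Icc_of_unimodal hmono hanti ha hac hcb hab hu) (hf0 u hu0)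
  · rw [hratio u hu.1]
    exact mul_le_mul_of_nonneg_right
      (le_of_notMem_Icc_of_unimodal hmono hanti ha hac hcb hab hu.1 hu.2) (hf0 u hu.1)

end Unimodal

section GammaDensity

variable {a b a₁ b₁ a₂ b₂ : ℝ}

theorem gammaDens_nonneg (ha : 0 < a) (hb : 0 ≤ b) {u : ℝ} (hu : 0 ≤ u) :
    0 ≤ gammaDens a b u := by
  unfold gammaDens
  have := Gamma_pos_of_pos ha
  positivity

theorem integrableOn_gammaDens (ha : 0 < a) (hb : 0 < b) :
    IntegrableOn (gammaDens a b) (Ioi 0) := by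
  have h := integrableOn_rpow_mul_exp_neg_mul_rpow (s := a - 1) (p := 1) (by linarith) one_pos hb
  simp_rw [rpow_one] at h
  refine IntegrableOn.congr_fun (h.const_mul (b ^ a / Gamma a)) (fun u _ => ?_) measurableSet_Ioi
  unfold gammaDens
  ring

theorem integral_gammaDens (ha : 0 < a) (hb : 0 < b) : ∫ u in Ioi 0, gammaDens a b u = 1 := by
  have hdens : ∀ u, gammaDens a b u = b ^ a / Gamma a * (u ^ (a - 1) * exp (-(b * u))) := by
    intro u
    unfold gammaDens
    ring_nf
  simp_rw [hdens]
  rw [integral_const_mul, integral_rpow_mul_exp_neg_mul_Ioi ha hb, one_div, inv_rpow hb.le]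
  have := (rpow_pos_of_pos hb a).ne'
  have := (Gamma_pos_of_pos ha).ne'
  field_simp

theorem exists_gammaDens_eq_mul_exp_mul_gammaDens (ha₁ : 0 < a₁) (hb₁ : 0 ≤ b₁) (ha₂ : 0 < a₂)
    (hb₂ : 0 < b₂) : ∃ C, 0 ≤ C ∧ ∀ u > 0,
      gammaDens a₁ b₁ u = C * exp ((a₁ - a₂) * log u - (b₁ - b₂) * u) * gammaDens a₂ b₂ u := by
  have := Gamma_pos_of_pos ha₁
  have := (rpow_pos_of_pos hb₂ a₂).ne'
  have := (Gamma_pos_of_pos ha₂).ne'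
  refine ⟨(b₁ ^ a₁ / Gamma a₁) / (b₂ ^ a₂ / Gamma a₂), by positivity, fun u hu => ?_⟩
  unfold gammaDens
  have hexp : exp (log u * (a₁ - 1)) * exp (-b₁ * u) = exp ((a₁ - a₂) * log u - (b₁ - b₂) * u)
      * (exp (log u * (a₂ - 1)) * exp (-b₂ * u)) := by
    simp only [← exp_add]
    ring_nf
  rw [rpow_def_of_pos hu, rpow_def_of_pos hu, mul_assoc _ (exp _), hexp]
  field_simp

end GammaDensity

theorem log_mul_sub_mul_div_eq_of_mul_exp_neg_eq {c r₁ r₂ : ℝ} (hc : 0 < c) (hr₁ : 0 < r₁)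
    (hr₂ : 0 < r₂) (h : r₁ * exp (-r₁) = r₂ * exp (-r₂)) :
    log (c * r₁) - c * r₁ / c = log (c * r₂) - c * r₂ / c := by
  have hlog := congrArg log h
  simp only [log_mul hr₁.ne' (exp_ne_zero _), log_mul hr₂.ne' (exp_ne_zero _), log_exp] at hlog
  simp only [log_mul hc.ne' hr₁.ne', log_mul hc.ne' hr₂.ne', mul_div_cancel_left₀ _ hc.ne']
  linarith

/-- Let `α₁ ≥ α₂ > 0`, `β_i = (α_i + 1/2)/x_c` with `x_c > 0`, and let `M_i`
be the Gamma(α_i, rate β_i) distribution.  For `0 < r₁ ≤ 1 ≤ r₂` linked by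
`r₁ e^{−r₁} = r₂ e^{−r₂}` (equivalently `log(r₁/r₂) = r₁ − r₂`), one has
`M₁(x_c r₁ ≤ u ≤ x_c r₂) ≥ M₂(x_c r₁ ≤ u ≤ x_c r₂)`. -/
theorem stmt19 (α1 α2 xc r1 r2 : ℝ)
    (hα2 : 0 < α2) (hα : α2 ≤ α1) (hxc : 0 < xc)
    (hr1 : 0 < r1) (hr1le : r1 ≤ 1) (hr2 : 1 ≤ r2)
    (hlink : r1 * Real.exp (-r1) = r2 * Real.exp (-r2)) :
    (∫ u in Set.Icc (xc * r1) (xc * r2), gammaDens α2 ((α2 + 1 / 2) / xc) u)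
      ≤ ∫ u in Set.Icc (xc * r1) (xc * r2), gammaDens α1 ((α1 + 1 / 2) / xc) u := by
  have hα1 : 0 < α1 := hα2.trans_le hα
  have hβ1 : 0 < (α1 + 1 / 2) / xc := by positivity
  have hβ2 : 0 < (α2 + 1 / 2) / xc := by positivity
  obtain ⟨C, hC, hratio⟩ := exists_gammaDens_eq_mul_exp_mul_gammaDens hα1 hβ1.le hα2 hβ2
  have hρ : Monotone fun t => C * exp ((α1 - α2) * t) := by
    intro s t hst
    have := sub_nonneg.2 hα
    dsimp only
    gcongr
  refine setIntegral_Icc_le_of_eq_mul_unimodal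
    (φ := fun u => C * exp ((α1 - α2) * (log u - u / xc)))
    (integrableOn_gammaDens hα2 hβ2) (integrableOn_gammaDens hα1 hβ1)
    (fun u hu => gammaDens_nonneg hα2 hβ2.le (le_of_lt hu))
    (by rw [integral_gammaDens hα2 hβ2, integral_gammaDens hα1 hβ1])
    (fun u hu => ?_) (hρ.comp_monotoneOn (monotoneOn_log_sub_div hxc))
    (hρ.comp_antitoneOn (antitoneOn_log_sub_div hxc)) (mul_pos hxc hr1)
    (mul_le_of_le_one_right hxc.le hr1le) (le_mul_of_one_le_right hxc.le hr2) ?_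
  · rw [hratio u hu]
    congr 3
    field_simp
    ring
  · simp only [log_mul_sub_mul_div_eq_of_mul_exp_neg_eq hxc hr1 (one_pos.trans_le hr2) hlink]
end
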